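/- arXiv:1907.02036 — 4 statements merged into one kernel-verified Lean document; each statement's English description precedes it below -/
import Mathlib

section
/- Let D ⊆ ℝⁿ be finite, z : ℝⁿ → ℝᵏ, and x* ∈ D. Consider the optimal value V = max { Σᵢ sᵢ : x ∈ D, s ∈ ℝᵏ, s ≥ 0, zᵢ(x) − sᵢ = zᵢ(x*) for all i }. Then x* is efficient for z over D if and only if V = 0. -/
/-!
A feasible point `(x, s)` of program Q forces `s = z x - z x*`, so the feasible objective values
are the sums `∑ i, (z x i - z x* i)` over those `x ∈ D` with `z x* ≤ z x`; the point `x*` itself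
gives the value `0`. Such a sum of nonnegative terms is positive exactly when some term is, i.e.
exactly when `x` dominates `x*`. Hence `0` is the maximum iff nothing dominates `x*`.
-/

section

variable {α ι : Type*} [Fintype ι]

/-- The objective values of the feasible points of program Q for the candidate `xs`. -/
def slackSums (D : Set α) (z : α → ι → ℝ) (xs : α) : Set ℝ :=
  {v | ∃ x ∈ D, ∃ s : ι → ℝ, (∀ i, 0 ≤ s i) ∧ (∀ i, z x i - s i = z xs i) ∧ v = ∑ i, s i}

theorem Fintype.sum_sub_pos_iff_lt {M : Type*} [AddCommGroup M] [PartialOrder M]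
    [IsOrderedCancelAddMonoid M] {f g : ι → M} (h : f ≤ g) :
    0 < ∑ i, (g i - f i) ↔ f < g := by
  have := Fintype.sum_pos_iff_of_nonneg (sub_nonneg.2 h)
  simpa only [Pi.sub_apply, sub_pos] using this

theorem slackSums_eq_image (D : Set α) (z : α → ι → ℝ) (xs : α) :
    slackSums D z xs = (fun x ↦ ∑ i, (z x i - z xs i)) '' {x ∈ D | z xs ≤ z x} := by
  ext v
  constructor
  · rintro ⟨x, hx, s, hs, hzs, rfl⟩
    have hs_eq : ∀ i, s i = z x i - z xs i := fun i ↦ by linarith [hzs i]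
    exact ⟨x, ⟨hx, fun i ↦ by linarith [hs i, hs_eq i]⟩, by simp only [hs_eq]⟩
  · rintro ⟨x, ⟨hx, hle⟩, rfl⟩
    exact ⟨x, hx, fun i ↦ z x i - z xs i, fun i ↦ sub_nonneg.2 (hle i), fun i ↦ sub_sub_cancel _ _,
      rfl⟩

theorem isGreatest_slackSums_zero_iff {D : Set α} {z : α → ι → ℝ} {xs : α} (hxs : xs ∈ D) :
    IsGreatest (slackSums D z xs) 0 ↔ ∀ y ∈ D, ¬ z xs < z y := by
  have hzero : (0 : ℝ) ∈ slackSums D z xs := ⟨xs, hxs, 0, fun _ ↦ le_rfl, by simp, by simp⟩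
  rw [IsGreatest, and_iff_right hzero, slackSums_eq_image, mem_upperBounds, Set.forall_mem_image]
  refine forall_congr' fun y ↦ ⟨fun h hy hlt ↦ ?_, fun h ⟨hy, hle⟩ ↦ ?_⟩
  · exact (h ⟨hy, hlt.le⟩).not_gt ((Fintype.sum_sub_pos_iff_lt hlt.le).2 hlt)
  · exact not_lt.1 fun hpos ↦ h hy ((Fintype.sum_sub_pos_iff_lt hle).1 hpos)

end

theorem stmt_6_general {n k : ℕ} (D : Set (Fin n → ℝ))
    (z : (Fin n → ℝ) → Fin k → ℝ) (xs : Fin n → ℝ) (hxs : xs ∈ D) :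
    (¬ ∃ y ∈ D, (∀ i, z xs i ≤ z y i) ∧ (∃ i, z xs i < z y i)) ↔
    IsGreatest {v : ℝ | ∃ x ∈ D, ∃ s : Fin k → ℝ,
      (∀ i, 0 ≤ s i) ∧ (∀ i, z x i - s i = z xs i) ∧ v = ∑ i, s i} 0 := by
  rw [← slackSums, isGreatest_slackSums_zero_iff hxs]
  simp only [Pi.lt_def, Pi.le_def, not_exists, not_and]

/-- Efficiency test (program Q): `x*` is efficient iff the optimal value of Q is 0. -/
theorem stmt_6 {n k : ℕ} (D : Set (Fin n → ℝ)) (hfin : D.Finite)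
    (z : (Fin n → ℝ) → Fin k → ℝ) (xs : Fin n → ℝ) (hxs : xs ∈ D) :
    (¬ ∃ y ∈ D, (∀ i, z xs i ≤ z y i) ∧ (∃ i, z xs i < z y i)) ↔
    IsGreatest {v : ℝ | ∃ x ∈ D, ∃ s : Fin k → ℝ,
      (∀ i, 0 ≤ s i) ∧ (∀ i, z x i - s i = z xs i) ∧ v = ∑ i, s i} 0 :=
  stmt_6_general D z xs hxs
end

section
/- Let D ⊆ ℝⁿ be finite, z : ℝⁿ → ℝᵏ, x* ∈ D, and suppose (x̂, ŝ) attains the maximum of Σᵢ sᵢ over {(x, s) : x ∈ D, s ≥ 0, zᵢ(x) − sᵢ = zᵢ(x*) ∀i}. Then x̂ is an efficient point of D for z. -/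
theorem stmt_7_general {n k : ℕ} (D : Set (Fin n → ℝ))
    (z : (Fin n → ℝ) → Fin k → ℝ) (xs : Fin n → ℝ)
    (xh : Fin n → ℝ) (sh : Fin k → ℝ)
    (hsh : ∀ i, 0 ≤ sh i) (hfeas : ∀ i, z xh i - sh i = z xs i)
    (hopt : ∀ x ∈ D, ∀ s : Fin k → ℝ, (∀ i, 0 ≤ s i) →
      (∀ i, z x i - s i = z xs i) → ∑ i, s i ≤ ∑ i, sh i) :
    ¬ ∃ y ∈ D, (∀ i, z xh i ≤ z y i) ∧ (∃ i, z xh i < z y i) := by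
  rintro ⟨y, hyD, hle, j, hlt⟩
  -- A point dominating `xh` has a feasible slack vector, componentwise larger than `sh`.
  have hsh_eq : sh = z xh - z xs := funext fun i => by simp [← hfeas i]
  have hdom : sh < z y - z xs := hsh_eq ▸ sub_lt_sub_right (Pi.lt_def.2 ⟨hle, j, hlt⟩) _
  have hfeas_y : ∀ i, z y i - (z y - z xs) i = z xs i := fun i => by simp
  have hopt_y := hopt y hyD _ (fun i => (hsh i).trans (hdom.le i)) hfeas_y
  exact (Fintype.sum_strictMono hdom).not_ge hopt_y

/-- An optimal solution of the efficiency-test program Q is itself efficient. -/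
theorem stmt_7 {n k : ℕ} (D : Set (Fin n → ℝ)) (hfin : D.Finite)
    (z : (Fin n → ℝ) → Fin k → ℝ) (xs : Fin n → ℝ) (hxs : xs ∈ D)
    (xh : Fin n → ℝ) (sh : Fin k → ℝ)
    (hxh : xh ∈ D) (hsh : ∀ i, 0 ≤ sh i) (hfeas : ∀ i, z xh i - sh i = z xs i)
    (hopt : ∀ x ∈ D, ∀ s : Fin k → ℝ, (∀ i, 0 ≤ s i) →
      (∀ i, z x i - s i = z xs i) → ∑ i, s i ≤ ∑ i, sh i) :
    ¬ ∃ y ∈ D, (∀ i, z xh i ≤ z y i) ∧ (∃ i, z xh i < z y i) :=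
  stmt_7_general D z xs xh sh hsh hfeas hopt
end

section
/- For each i ∈ {1,…,k}, let zᵢ(x) = (Σ_{j∈N} c̄ⁱⱼ xⱼ + ᾱⁱ)/(Σ_{j∈N} d̄ⁱⱼ xⱼ + β̄ⁱ), where β̄ⁱ > 0 and all denominators are positive on the feasible set. Suppose x ≥ 0 satisfies xⱼ = 0 for every j ∈ N with γ̄ⁱⱼ := β̄ⁱ c̄ⁱⱼ − ᾱⁱ d̄ⁱⱼ > 0 for some i (that is, x is supported only on indices j with γ̄ⁱⱼ ≤ 0 for all i). Then zᵢ(x) ≤ ᾱⁱ/β̄ⁱ for every i ∈ {1,…,k}. -/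
/-! Clearing the positive denominators, `zᵢ(x) ≤ ᾱⁱ/β̄ⁱ` becomes `Σⱼ γ̄ⁱⱼ xⱼ ≤ 0` with
`γ̄ⁱⱼ = β̄ⁱ c̄ⁱⱼ - ᾱⁱ d̄ⁱⱼ`; every term of that sum is nonpositive, since either `γ̄ⁱⱼ ≤ 0`
and `xⱼ ≥ 0`, or `γ̄ⁱⱼ > 0` and then `xⱼ = 0`. -/

open Finset

theorem add_div_add_le_div_of_mul_sub_mul_nonpos {K : Type*} [Field K] [LinearOrder K]
    [IsStrictOrderedRing K] {a b s t : K} (hb : 0 < b) (htb : 0 < t + b)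
    (h : b * s - a * t ≤ 0) : (s + a) / (t + b) ≤ a / b := by
  rw [div_le_div_iff₀ htb hb]
  linarith

theorem Finset.sum_mul_nonpos_of_pos_imp_eq_zero {ι K : Type*} [Field K] [LinearOrder K]
    [IsStrictOrderedRing K] (s : Finset ι) {w x : ι → K} (hx : ∀ j ∈ s, 0 ≤ x j)
    (hw : ∀ j ∈ s, 0 < w j → x j = 0) : ∑ j ∈ s, w j * x j ≤ 0 := by
  refine sum_nonpos fun j hj => ?_
  rcases le_or_gt (w j) 0 with hwj | hwj
  · exact mul_nonpos_of_nonpos_of_nonneg hwj (hx j hj)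
  · rw [hw j hj hwj, mul_zero]

/-- Dominance lemma behind the efficient cut: a nonnegative point supported only
on nonimproving nonbasic directions has all criterion values at most those of
the current basic solution. -/
theorem stmt_8 {ι k : ℕ} (N : Finset (Fin ι))
    (cb db : Fin k → Fin ι → ℝ) (αb βb : Fin k → ℝ)
    (hβ : ∀ i, 0 < βb i) (x : Fin ι → ℝ) (hx : ∀ j, 0 ≤ x j)
    (hden : ∀ i, 0 < (∑ j ∈ N, db i j * x j) + βb i)
    (hsupp : ∀ j ∈ N, (∃ i, 0 < βb i * cb i j - αb i * db i j) → x j = 0) :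
    ∀ i, ((∑ j ∈ N, cb i j * x j) + αb i) / ((∑ j ∈ N, db i j * x j) + βb i)
      ≤ αb i / βb i := by
  intro i
  refine add_div_add_le_div_of_mul_sub_mul_nonpos (hβ i) (hden i) ?_
  calc βb i * ∑ j ∈ N, cb i j * x j - αb i * ∑ j ∈ N, db i j * x j
      = ∑ j ∈ N, (βb i * cb i j - αb i * db i j) * x j := by
        simp only [mul_sum, ← sum_sub_distrib, sub_mul, mul_assoc]
    _ ≤ 0 := N.sum_mul_nonpos_of_pos_imp_eq_zero (fun j _ => hx j)
        fun j hj hγ => hsupp j hj ⟨i, hγ⟩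
end

section
/- Under the hypotheses of the dominance lemma, suppose additionally that for some fixed index i₀ one has γ̄^{i₀}ⱼ < 0 for all j ∈ N with xⱼ > 0, and that x ≠ 0 (i.e., some nonbasic variable is strictly positive). Then z_{i₀}(x) < ᾱ^{i₀}/β̄^{i₀}, so the vector z(x*) strictly dominates z(x) and x is not efficient. -/
/-! Clearing the (positive) denominators, `z(x) < α/β` becomes
`(∑ cⱼ xⱼ + α) β - α (∑ dⱼ xⱼ + β) < 0`, and this cross difference is exactly the
reduced-gradient sum `∑ γⱼ xⱼ` with `γⱼ = β cⱼ - α dⱼ`. Every term of that sum is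
`≤ 0` (it vanishes where `xⱼ = 0`) and the term at a positive coordinate is `< 0`. -/

open Finset

section

variable {R ι : Type*}

theorem sum_mul_neg_of_neg_of_pos [Ring R] [LinearOrder R] [IsStrictOrderedRing R]
    {s : Finset ι} {f g : ι → R} (hg : ∀ j, 0 ≤ g j) (hf : ∀ j ∈ s, 0 < g j → f j < 0)
    (hpos : ∃ j ∈ s, 0 < g j) : ∑ j ∈ s, f j * g j < 0 := by
  obtain ⟨j₀, hj₀, hgj₀⟩ := hpos
  refine sum_neg' (fun j hj => ?_) ⟨j₀, hj₀, mul_neg_of_neg_of_pos (hf j₀ hj₀ hgj₀) hgj₀⟩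
  rcases (hg j).eq_or_lt with hzero | hgj
  · simp [← hzero]
  · exact (mul_neg_of_neg_of_pos (hf j hj hgj) hgj).le

theorem affine_cross_sub_eq_sum [CommRing R] (s : Finset ι) (c d x : ι → R) (α β : R) :
    ((∑ j ∈ s, c j * x j) + α) * β - α * ((∑ j ∈ s, d j * x j) + β)
      = ∑ j ∈ s, (β * c j - α * d j) * x j := by
  rw [add_mul, mul_add, sum_mul, mul_sum, add_sub_add_right_eq_sub, ← sum_sub_distrib]
  exact sum_congr rfl fun j _ => by ring

theorem affine_div_lt_div_of_sum_neg [Field R] [LinearOrder R] [IsStrictOrderedRing R]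
    {s : Finset ι} {c d x : ι → R} {α β : R} (hβ : 0 < β)
    (hden : 0 < (∑ j ∈ s, d j * x j) + β)
    (hneg : ∑ j ∈ s, (β * c j - α * d j) * x j < 0) :
    ((∑ j ∈ s, c j * x j) + α) / ((∑ j ∈ s, d j * x j) + β) < α / β := by
  rw [div_lt_div_iff₀ hden hβ, ← sub_neg, affine_cross_sub_eq_sum]
  exact hneg

end

theorem stmt_9_general {ι k : ℕ} (N : Finset (Fin ι))
    (cb db : Fin k → Fin ι → ℝ) (αb βb : Fin k → ℝ)
    (hβ : ∀ i, 0 < βb i) (x : Fin ι → ℝ) (hx : ∀ j, 0 ≤ x j)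
    (hden : ∀ i, 0 < (∑ j ∈ N, db i j * x j) + βb i)
    (i₀ : Fin k)
    (hstrict : ∀ j ∈ N, 0 < x j → βb i₀ * cb i₀ j - αb i₀ * db i₀ j < 0)
    (hpos : ∃ j ∈ N, 0 < x j) :
    ((∑ j ∈ N, cb i₀ j * x j) + αb i₀) / ((∑ j ∈ N, db i₀ j * x j) + βb i₀)
      < αb i₀ / βb i₀ :=
  affine_div_lt_div_of_sum_neg (hβ i₀) (hden i₀) (sum_mul_neg_of_neg_of_pos hx hstrict hpos)

/-- Strict version of the dominance lemma: if along every positive coordinate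
the reduced gradient of criterion `i₀` is strictly negative and `x ≠ 0`, then
criterion `i₀` strictly decreases, so `x` is dominated by the basic solution. -/
theorem stmt_9 {ι k : ℕ} (N : Finset (Fin ι))
    (cb db : Fin k → Fin ι → ℝ) (αb βb : Fin k → ℝ)
    (hβ : ∀ i, 0 < βb i) (x : Fin ι → ℝ) (hx : ∀ j, 0 ≤ x j)
    (hden : ∀ i, 0 < (∑ j ∈ N, db i j * x j) + βb i)
    (hsupp : ∀ j ∈ N, (∃ i, 0 < βb i * cb i j - αb i * db i j) → x j = 0)
    (i₀ : Fin k)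
    (hstrict : ∀ j ∈ N, 0 < x j → βb i₀ * cb i₀ j - αb i₀ * db i₀ j < 0)
    (hpos : ∃ j ∈ N, 0 < x j) :
    ((∑ j ∈ N, cb i₀ j * x j) + αb i₀) / ((∑ j ∈ N, db i₀ j * x j) + βb i₀)
      < αb i₀ / βb i₀ :=
  stmt_9_general N cb db αb βb hβ x hx hden i₀ hstrict hpos
end
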